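/- arXiv:2605.06866 — 7 statements merged into one kernel-verified Lean document; each statement's English description precedes it below -/
import Mathlib

section
/- Let S be a nonempty finite index set, for each s ∈ S let E(s) be a finite-dimensional real inner product space, let V = ∏_{s∈S} E(s), and fix p ∈ [2,∞). Define g_p(U) := (1/2)‖U‖_{2,p}². Then g_p is convex on V, g_p is Fréchet differentiable on V, and for all U, U' ∈ V one has g_p(U') ≤ g_p(U) + Dg_p(U)[U' − U] + ((p − 1)/2) · ‖U' − U‖_{2,p}², where Dg_p(U) denotes the Fréchet derivative of g_p at U. -/
/-!
`blockPotential p` is half the square of the `PiLp` norm, hence convex, and it is differentiable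
at `0` because it is quadratically small there. For the smoothness bound it suffices to bound the
second derivative along every line `t ↦ X + t • W` by `(p - 1) ‖W‖_{2,p}²`. Writing
`Φ = ‖X‖_{2,p}^p`, the derivative of `Φ ^ ((2 - p) / p)` contributes a nonpositive term, each block
`‖x‖ ^ (p - 2) ⟪x, w⟫` has derivative at most `(p - 1) ‖x‖ ^ (p - 2) ‖w‖²` by Cauchy–Schwarz, and
Hölder with exponents `p / (p - 2)` and `p / 2` sums these to `(p - 1) Φ ^ ((p - 2) / p) ‖W‖_{2,p}²`.
-/

open Finset Real Filter Asymptotics Topology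
open scoped RealInnerProductSpace

noncomputable section

lemma hasDerivAt_abs_rpow_mul_self_zero {r : ℝ} (hr : 0 ≤ r) :
    HasDerivAt (fun v : ℝ => |v| ^ r * v) (0 ^ r) 0 := by
  rcases hr.eq_or_lt with rfl | hr
  · simpa using hasDerivAt_id' (0 : ℝ)
  rw [Real.zero_rpow hr.ne', hasDerivAt_iff_isLittleO_nhds_zero]
  have hsmall : (fun v : ℝ => |v| ^ r) =o[𝓝 0] fun _ => (1 : ℝ) := by
    rw [isLittleO_one_iff]
    simpa [Real.zero_rpow hr.ne'] using
      (continuous_abs.rpow_const fun _ => Or.inr hr.le).tendsto (0 : ℝ)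
  simpa using hsmall.mul_isBigO (isBigO_refl (fun v : ℝ => v) _)

lemma le_add_add_half_of_hasDerivAt_le {h h' : ℝ → ℝ} {K : ℝ}
    (hh : ∀ t, HasDerivAt h (h' t) t) (hh' : ∀ t, ∃ d, HasDerivAt h' d t ∧ d ≤ K) :
    h 1 ≤ h 0 + h' 0 + K / 2 := by
  choose h'' hh'' hK using hh'
  have slope_le : ∀ t, 0 ≤ t → h' t - h' 0 ≤ K * (t - 0) := fun t ht =>
    image_sub_le_mul_sub_of_deriv_le (fun t => (hh'' t).differentiableAt)
      (fun t => (hh'' t).deriv ▸ hK t) ht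
  have hq : ∀ t, HasDerivAt (fun t => K / 2 * t ^ 2 + h' 0 * t - h t)
      (K * t + h' 0 - h' t) t := by
    intro t
    refine ((((hasDerivAt_pow 2 t).const_mul (K / 2)).fun_add
      ((hasDerivAt_id' t).const_mul (h' 0))).fun_sub (hh t)).congr_deriv ?_
    push_cast
    ring
  have mono : MonotoneOn (fun t => K / 2 * t ^ 2 + h' 0 * t - h t) (Set.Ici 0) :=
    monotoneOn_of_hasDerivWithinAt_nonneg (convex_Ici 0)
      (fun t _ => (hq t).continuousAt.continuousWithinAt) (fun t _ => (hq t).hasDerivWithinAt)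
      fun t ht => by
        have := slope_le t (interior_subset ht)
        linarith
  have := mono Set.self_mem_Ici (Set.mem_Ici.2 zero_le_one) zero_le_one
  norm_num at this
  linarith

lemma sum_rpow_mul_sq_le {ι : Type*} (s : Finset ι) {p : ℝ} (hp : 2 ≤ p) {a b : ι → ℝ}
    (ha : ∀ i, 0 ≤ a i) (hb : ∀ i, 0 ≤ b i) :
    ∑ i ∈ s, a i ^ (p - 2) * b i ^ 2 ≤
      (∑ i ∈ s, a i ^ p) ^ ((p - 2) / p) * (∑ i ∈ s, b i ^ p) ^ (2 / p) := by
  rcases hp.eq_or_lt with rfl | hp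
  · norm_num
  have hpq : (p / (p - 2)).HolderConjugate (p / 2) :=
    Real.holderConjugate_iff.2 ⟨by rw [one_lt_div] <;> linarith, by field_simp; ring⟩
  convert inner_le_Lp_mul_Lq_of_nonneg s hpq (f := fun i => a i ^ (p - 2)) (g := fun i => b i ^ 2)
    (fun i _ => rpow_nonneg (ha i) _) (fun i _ => by positivity) using 3
  · refine sum_congr rfl fun i _ => ?_
    rw [← rpow_mul (ha i), mul_div_cancel₀ _ (by linarith)]
  · rw [one_div_div]
  · refine sum_congr rfl fun i _ => ?_
    rw [← rpow_natCast, ← rpow_mul (hb i), Nat.cast_ofNat, mul_div_cancel₀ _ two_ne_zero]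
  · rw [one_div_div]

section Line

variable {V : Type*} [NormedAddCommGroup V] [NormedSpace ℝ V]

lemma hasDerivAt_add_smul (a w : V) (t : ℝ) : HasDerivAt (fun t : ℝ => a + t • w) w t := by
  simpa using ((hasDerivAt_id t).smul_const w).const_add a

lemma hasDerivAt_add_smul_of_forall_zero {f : V → ℝ} {f' : V → ℝ} {W : V}
    (hf : ∀ X, HasDerivAt (fun t : ℝ => f (X + t • W)) (f' X) 0) (U : V) (t : ℝ) :
    HasDerivAt (fun t : ℝ => f (U + t • W)) (f' (U + t • W)) t := by
  refine (HasDerivAt.comp_sub_const t t (by rw [sub_self]; exact hf (U + t • W)))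
    |>.congr_of_eventuallyEq (Eventually.of_forall fun x => ?_)
  simp only [add_assoc, ← add_smul, add_sub_cancel]

lemma le_add_add_half_of_hasDerivAt_line_le {f : V → ℝ} {f' : V → V → ℝ} {W : V} {K : ℝ}
    (hf : ∀ X, HasDerivAt (fun t : ℝ => f (X + t • W)) (f' X W) 0)
    (hf' : ∀ X, ∃ d, HasDerivAt (fun t : ℝ => f' (X + t • W) W) d 0 ∧ d ≤ K) (U : V) :
    f (U + W) ≤ f U + f' U W + K / 2 := by
  choose d hd hdK using hf'
  simpa using le_add_add_half_of_hasDerivAt_le (h := fun t : ℝ => f (U + t • W))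
    (hasDerivAt_add_smul_of_forall_zero hf U) fun t =>
      ⟨_, hasDerivAt_add_smul_of_forall_zero (f := fun X => f' X W) hd U t, hdK _⟩

end Line

section Inner

variable {F : Type*} [NormedAddCommGroup F] [InnerProductSpace ℝ F]

lemma hasDerivAt_norm_add_smul_rpow (a w : F) {p : ℝ} (hp : 1 < p) (t : ℝ) :
    HasDerivAt (fun t : ℝ => ‖a + t • w‖ ^ p)
      (p * (‖a + t • w‖ ^ (p - 2) * ⟪a + t • w, w⟫)) t := by
  have := (hasFDerivAt_norm_rpow (a + t • w) hp).comp_hasDerivAt t (hasDerivAt_add_smul a w t)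
  rwa [FunLike.coe_smul, Pi.smul_apply, innerSL_apply_apply, smul_eq_mul, mul_assoc] at this

lemma exists_hasDerivAt_norm_add_smul_rpow_mul_inner_le {p : ℝ} (hp : 2 ≤ p) (a w : F) :
    ∃ d, HasDerivAt (fun t : ℝ => ‖a + t • w‖ ^ (p - 2) * ⟪a + t • w, w⟫) d 0 ∧
      d ≤ (p - 1) * (‖a‖ ^ (p - 2) * ‖w‖ ^ 2) := by
  rcases eq_or_ne a 0 with rfl | ha
  · have hline : (fun t : ℝ => ‖(0 : F) + t • w‖ ^ (p - 2) * ⟪(0 : F) + t • w, w⟫) =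
        fun t => ‖w‖ ^ (p - 2) * ‖w‖ ^ 2 * (|t| ^ (p - 2) * t) := by
      ext t
      rw [zero_add, norm_smul, mul_rpow (norm_nonneg _) (norm_nonneg _), real_inner_smul_left,
        real_inner_self_eq_norm_sq, norm_eq_abs]
      ring
    refine ⟨_, hline ▸ (hasDerivAt_abs_rpow_mul_self_zero (by linarith)).const_mul _, ?_⟩
    rw [norm_zero, mul_right_comm, ← mul_rpow (norm_nonneg _) le_rfl, mul_zero]
    have : 0 ≤ (0 : ℝ) ^ (p - 2) * ‖w‖ ^ 2 := by positivity
    nlinarith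
  · have hsq : ∀ x : F, ‖x‖ ^ (p - 2) = (‖x‖ ^ 2) ^ ((p - 2) / 2) := fun x => by
      rw [← rpow_natCast, ← rpow_mul (norm_nonneg _), Nat.cast_ofNat,
        mul_div_cancel₀ _ two_ne_zero]
    have hnorm := ((hasDerivAt_add_smul a w 0).norm_sq.rpow_const (p := (p - 2) / 2)
      (Or.inl (by simpa using ha))).mul
        ((hasDerivAt_add_smul a w 0).inner ℝ (hasDerivAt_const 0 w))
    simp only [← hsq, zero_smul, add_zero] at hnorm
    refine ⟨_, hnorm, ?_⟩
    have hcs : ⟪a, w⟫ ^ 2 / ‖a‖ ^ 2 ≤ ‖w‖ ^ 2 := by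
      rw [div_le_iff₀ (by positivity), ← mul_pow, mul_comm]
      exact sq_le_sq' (neg_le_of_abs_le (abs_real_inner_le_norm a w)) (real_inner_le_norm a w)
    rw [rpow_sub_one (by simpa using ha), ← hsq, inner_zero_right, zero_add,
      real_inner_self_eq_norm_sq]
    calc _ = (p - 2) * ‖a‖ ^ (p - 2) * (⟪a, w⟫ ^ 2 / ‖a‖ ^ 2) + ‖a‖ ^ (p - 2) * ‖w‖ ^ 2 := by
          ring
      _ ≤ (p - 2) * ‖a‖ ^ (p - 2) * ‖w‖ ^ 2 + ‖a‖ ^ (p - 2) * ‖w‖ ^ 2 := by gcongr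
      _ = _ := by ring

end Inner

section Normed

variable {S : Type*} [Fintype S] {E : S → Type*} [∀ s, NormedAddCommGroup (E s)] {p : ℝ}

def mixedNormPow (p : ℝ) (U : ∀ s, E s) : ℝ := ∑ s, ‖U s‖ ^ p

def mixedNorm (p : ℝ) (U : ∀ s, E s) : ℝ := mixedNormPow p U ^ (1 / p)

def blockPotential (p : ℝ) (U : ∀ s, E s) : ℝ := 1 / 2 * mixedNorm p U ^ 2

lemma mixedNormPow_nonneg (p : ℝ) (U : ∀ s, E s) : 0 ≤ mixedNormPow p U :=
  sum_nonneg fun _ _ => by positivity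

lemma mixedNormPow_pos {U : ∀ s, E s} (hU : U ≠ 0) : 0 < mixedNormPow p U := by
  obtain ⟨s, hs⟩ := Function.ne_iff.1 hU
  exact sum_pos' (fun _ _ => by positivity)
    ⟨s, mem_univ _, rpow_pos_of_pos (norm_pos_iff.2 hs) p⟩

lemma mixedNorm_sq (p : ℝ) (U : ∀ s, E s) : mixedNorm p U ^ 2 = mixedNormPow p U ^ (2 / p) := by
  rw [mixedNorm, ← rpow_natCast, ← rpow_mul (mixedNormPow_nonneg p U)]
  ring_nf

lemma blockPotential_eq_rpow (p : ℝ) :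
    blockPotential p (E := E) = fun U => 1 / 2 * mixedNormPow p U ^ (2 / p) :=
  funext fun U => by rw [blockPotential, mixedNorm_sq]

lemma mixedNorm_eq_norm_toLp (hp : 0 < p) (U : ∀ s, E s) :
    mixedNorm p U = ‖WithLp.toLp (ENNReal.ofReal p) U‖ := by
  rw [PiLp.norm_eq_sum (by rwa [ENNReal.toReal_ofReal hp.le]), ENNReal.toReal_ofReal hp.le]
  rfl

lemma mixedNormPow_rpow_mul_sum_le (hp : 2 ≤ p) {X : ∀ s, E s} (hX : X ≠ 0) (W : ∀ s, E s) :
    mixedNormPow p X ^ ((2 - p) / p) * ∑ s, ‖X s‖ ^ (p - 2) * ‖W s‖ ^ 2 ≤ mixedNorm p W ^ 2 := by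
  have hΦ := mixedNormPow_pos (p := p) hX
  calc mixedNormPow p X ^ ((2 - p) / p) * ∑ s, ‖X s‖ ^ (p - 2) * ‖W s‖ ^ 2
      ≤ mixedNormPow p X ^ ((2 - p) / p) * (mixedNormPow p X ^ ((p - 2) / p) * mixedNorm p W ^ 2) :=
        mul_le_mul_of_nonneg_left (mixedNorm_sq p W ▸
          sum_rpow_mul_sq_le univ hp (fun s => norm_nonneg (X s)) fun s => norm_nonneg (W s))
          (rpow_nonneg hΦ.le _)
    _ = mixedNorm p W ^ 2 := by
        rw [← mul_assoc, ← rpow_add hΦ, show (2 - p) / p + (p - 2) / p = 0 by ring, rpow_zero,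
          one_mul]

lemma blockPotential_eq_half_norm_toLp_sq (hp : 0 < p) :
    blockPotential p (E := E) = fun U => 1 / 2 * ‖WithLp.toLp (ENNReal.ofReal p) U‖ ^ 2 :=
  funext fun U => by rw [blockPotential, mixedNorm_eq_norm_toLp hp]

variable [∀ s, NormedSpace ℝ (E s)]

lemma mixedNormPow_smul (p t : ℝ) (U : ∀ s, E s) :
    mixedNormPow p (t • U) = |t| ^ p * mixedNormPow p U := by
  simp only [mixedNormPow, mul_sum, Pi.smul_apply, norm_smul, norm_eq_abs,
    mul_rpow (abs_nonneg t) (norm_nonneg _)]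

lemma blockPotential_smul (hp : 0 < p) (t : ℝ) (U : ∀ s, E s) :
    blockPotential p (t • U) = t ^ 2 * blockPotential p U := by
  rw [blockPotential, blockPotential, mixedNorm_sq, mixedNorm_sq, mixedNormPow_smul,
    mul_rpow (by positivity) (mixedNormPow_nonneg p U), ← rpow_mul (abs_nonneg t),
    mul_div_cancel₀ _ hp.ne', rpow_two, sq_abs]
  ring

lemma convexOn_blockPotential (hp : 1 ≤ p) :
    ConvexOn ℝ Set.univ (blockPotential p (E := E)) := by
  have : Fact (1 ≤ ENNReal.ofReal p) := ⟨ENNReal.one_le_ofReal.2 hp⟩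
  have h : ConvexOn ℝ Set.univ fun x : PiLp (ENNReal.ofReal p) E => 1 / 2 * ‖x‖ ^ 2 :=
    ((convexOn_norm convex_univ).pow (fun _ _ => norm_nonneg _) 2).smul (by norm_num)
  rw [blockPotential_eq_half_norm_toLp_sq (zero_lt_one.trans_le hp)]
  exact h.comp_linearMap (WithLp.linearEquiv (ENNReal.ofReal p) ℝ (∀ s, E s)).symm.toLinearMap

lemma hasFDerivAt_blockPotential_zero (hp : 1 ≤ p) :
    HasFDerivAt (blockPotential p) (0 : (∀ s, E s) →L[ℝ] ℝ) 0 := by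
  have : Fact (1 ≤ ENNReal.ofReal p) := ⟨ENNReal.one_le_ofReal.2 hp⟩
  set L := (PiLp.continuousLinearEquiv (ENNReal.ofReal p) ℝ E).symm
  have h : HasFDerivAt (fun x : PiLp (ENNReal.ofReal p) E => 1 / 2 * ‖x‖ ^ 2)
      (0 : PiLp (ENNReal.ofReal p) E →L[ℝ] ℝ) (L 0) := by
    rw [map_zero, hasFDerivAt_iff_isLittleO_nhds_zero]
    simpa using (isLittleO_norm_pow_id one_lt_two).const_mul_left (1 / 2 : ℝ)
  rw [blockPotential_eq_half_norm_toLp_sq (zero_lt_one.trans_le hp)]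
  exact (h.comp 0 L.hasFDerivAt).congr_fderiv (ContinuousLinearMap.zero_comp _)

end Normed

section BlockInner

variable {S : Type*} [Fintype S] {E : S → Type*} [∀ s, NormedAddCommGroup (E s)]
  [∀ s, InnerProductSpace ℝ (E s)] {p : ℝ}

/-- At `U = 0` the first factor is a junk value, but the sum vanishes. -/
def blockPotentialDeriv (p : ℝ) (U W : ∀ s, E s) : ℝ :=
  mixedNormPow p U ^ ((2 - p) / p) * ∑ s, ‖U s‖ ^ (p - 2) * ⟪U s, W s⟫

lemma hasDerivAt_mixedNormPow_line (hp : 1 < p) (X W : ∀ s, E s) :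
    HasDerivAt (fun t : ℝ => mixedNormPow p (X + t • W))
      (p * ∑ s, ‖X s‖ ^ (p - 2) * ⟪X s, W s⟫) 0 := by
  simpa [mixedNormPow, mul_sum] using
    HasDerivAt.fun_sum fun s _ => hasDerivAt_norm_add_smul_rpow (X s) (W s) hp 0

lemma hasDerivAt_blockPotential_line (hp : 1 < p) (X W : ∀ s, E s) :
    HasDerivAt (fun t : ℝ => blockPotential p (X + t • W)) (blockPotentialDeriv p X W) 0 := by
  rcases eq_or_ne X 0 with rfl | hX
  · have hline : (fun t : ℝ => blockPotential p (0 + t • W)) =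
        fun t => t ^ 2 * blockPotential p W :=
      funext fun t => by rw [zero_add, blockPotential_smul (zero_lt_one.trans hp)]
    rw [hline]
    refine ((hasDerivAt_pow 2 (0 : ℝ)).mul_const _).congr_deriv ?_
    simp [blockPotentialDeriv]
  · have h := ((hasDerivAt_mixedNormPow_line hp X W).rpow_const (p := 2 / p)
      (Or.inl (by simpa using (mixedNormPow_pos hX).ne'))).const_mul (1 / 2)
    rw [blockPotential_eq_rpow]
    refine h.congr_deriv ?_
    rw [zero_smul, add_zero, blockPotentialDeriv, show 2 / p - 1 = (2 - p) / p by field_simp]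
    field_simp

lemma differentiable_blockPotential (hp : 1 < p) :
    Differentiable ℝ (blockPotential p (E := E)) := by
  intro X
  rcases eq_or_ne X 0 with rfl | hX
  · exact (hasFDerivAt_blockPotential_zero hp.le).differentiableAt
  have hΦ : Differentiable ℝ (mixedNormPow p (E := E)) :=
    Differentiable.fun_sum fun s _ => (differentiable_apply s).norm_rpow hp
  rw [blockPotential_eq_rpow]
  exact ((hΦ X).rpow_const (Or.inl (mixedNormPow_pos hX).ne')).const_mul _

lemma fderiv_blockPotential_apply (hp : 1 < p) (X W : ∀ s, E s) :
    fderiv ℝ (blockPotential p) X W = blockPotentialDeriv p X W :=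
  ((differentiable_blockPotential hp X).hasFDerivAt.comp_hasDerivAt_of_eq 0
    (hasDerivAt_add_smul X W 0) (by simp)).unique (hasDerivAt_blockPotential_line hp X W)

lemma blockPotentialDeriv_smul_self (hp : 1 < p) (t : ℝ) (W : ∀ s, E s) :
    blockPotentialDeriv p (t • W) W = t * mixedNorm p W ^ 2 := by
  have hline : (fun u : ℝ => blockPotential p (t • W + u • W)) =
      fun u => (t + u) ^ 2 * blockPotential p W :=
    funext fun u => by rw [← add_smul, blockPotential_smul (zero_lt_one.trans hp)]
  have h : HasDerivAt (fun u : ℝ => blockPotential p (t • W + u • W))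
      (2 * t * blockPotential p W) 0 := by
    rw [hline]
    exact ((((hasDerivAt_id' (0 : ℝ)).const_add t).pow 2).mul_const _).congr_deriv (by norm_num)
  rw [(hasDerivAt_blockPotential_line hp (t • W) W).unique h, blockPotential]
  ring

lemma exists_hasDerivAt_blockPotentialDeriv_line_le (hp : 2 ≤ p) (X W : ∀ s, E s) :
    ∃ d, HasDerivAt (fun t : ℝ => blockPotentialDeriv p (X + t • W) W) d 0 ∧
      d ≤ (p - 1) * mixedNorm p W ^ 2 := by
  rcases eq_or_ne X 0 with rfl | hX
  · refine ⟨_, ((hasDerivAt_id' (0 : ℝ)).mul_const (mixedNorm p W ^ 2)).congr_of_eventuallyEq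
      (Eventually.of_forall fun t => ?_), ?_⟩
    · dsimp only
      rw [zero_add, blockPotentialDeriv_smul_self (by linarith)]
    · nlinarith [sq_nonneg (mixedNorm p W)]
  have hΦ : 0 < mixedNormPow p X := mixedNormPow_pos hX
  choose d hd hdle using fun s => exists_hasDerivAt_norm_add_smul_rpow_mul_inner_le hp (X s) (W s)
  have hΨ : HasDerivAt
      (fun t : ℝ => ∑ s, ‖X s + t • W s‖ ^ (p - 2) * ⟪X s + t • W s, W s⟫) (∑ s, d s) 0 :=
    HasDerivAt.fun_sum fun s _ => hd s
  have hΦ' := (hasDerivAt_mixedNormPow_line (p := p) (by linarith) X W).rpow_const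
    (p := (2 - p) / p) (Or.inl (by simpa using hΦ.ne'))
  refine ⟨_, hΦ'.mul hΨ, ?_⟩
  simp only [zero_smul, add_zero]
  set Φ := mixedNormPow p X
  set Ψ := ∑ s, ‖X s‖ ^ (p - 2) * ⟪X s, W s⟫
  have first_nonpos : p * Ψ * ((2 - p) / p) * Φ ^ ((2 - p) / p - 1) * Ψ ≤ 0 := by
    have : p * Ψ * ((2 - p) / p) * Φ ^ ((2 - p) / p - 1) * Ψ =
        (2 - p) * (Φ ^ ((2 - p) / p - 1) * Ψ ^ 2) := by
      field_simp
    rw [this]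
    exact mul_nonpos_of_nonpos_of_nonneg (by linarith) (by positivity)
  have second_le : Φ ^ ((2 - p) / p) * ∑ s, d s ≤ (p - 1) * mixedNorm p W ^ 2 :=
    calc Φ ^ ((2 - p) / p) * ∑ s, d s
        ≤ Φ ^ ((2 - p) / p) * ∑ s, (p - 1) * (‖X s‖ ^ (p - 2) * ‖W s‖ ^ 2) :=
          mul_le_mul_of_nonneg_left (sum_le_sum fun s _ => hdle s) (rpow_nonneg hΦ.le _)
      _ = (p - 1) * (Φ ^ ((2 - p) / p) * ∑ s, ‖X s‖ ^ (p - 2) * ‖W s‖ ^ 2) := by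
          rw [← mul_sum]
          ring
      _ ≤ (p - 1) * mixedNorm p W ^ 2 :=
          mul_le_mul_of_nonneg_left (mixedNormPow_rpow_mul_sum_le hp hX W) (by linarith)
  linarith

lemma blockPotential_add_le (hp : 2 ≤ p) (U W : ∀ s, E s) :
    blockPotential p (U + W) ≤
      blockPotential p U + blockPotentialDeriv p U W + (p - 1) / 2 * mixedNorm p W ^ 2 := by
  have h := le_add_add_half_of_hasDerivAt_line_le
    (hasDerivAt_blockPotential_line (by linarith) · W)
    (exists_hasDerivAt_blockPotentialDeriv_line_le hp · W) U
  linarith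

end BlockInner

end

theorem smooth_block_potential_general {S : Type*} [Fintype S]
    {E : S → Type*} [∀ s, NormedAddCommGroup (E s)]
    [∀ s, InnerProductSpace ℝ (E s)]
    (p : ℝ) (hp : 2 ≤ p)
    (g : (∀ s, E s) → ℝ)
    (hg : ∀ U : ∀ s, E s, g U = (1 / 2) * ((∑ s, ‖U s‖ ^ p) ^ (1 / p)) ^ 2) :
    ConvexOn ℝ Set.univ g ∧ Differentiable ℝ g ∧
      ∀ U U' : ∀ s, E s,
        g U' ≤ g U + fderiv ℝ g U (U' - U)
          + ((p - 1) / 2) * ((∑ s, ‖U' s - U s‖ ^ p) ^ (1 / p)) ^ 2 := by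
  obtain rfl : g = blockPotential p := funext hg
  refine ⟨convexOn_blockPotential (by linarith), differentiable_blockPotential (by linarith),
    fun U U' => ?_⟩
  have h := blockPotential_add_le hp U (U' - U)
  rw [add_sub_cancel, ← fderiv_blockPotential_apply (by linarith)] at h
  exact h

/-- **Smooth block potential.** For `p ∈ [2,∞)`, the function
`g_p(U) := (1/2)‖U‖_{2,p}²` on the finite product `V = ∏_{s∈S} E(s)` of Euclidean
blocks is convex, Fréchet differentiable, and `(p−1)`-smooth with respect to the
mixed block norm `‖·‖_{2,p}`. -/
theorem smooth_block_potential {S : Type*} [Fintype S] [Nonempty S]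
    {E : S → Type*} [∀ s, NormedAddCommGroup (E s)]
    [∀ s, InnerProductSpace ℝ (E s)] [∀ s, FiniteDimensional ℝ (E s)]
    (p : ℝ) (hp : 2 ≤ p)
    (g : (∀ s, E s) → ℝ)
    (hg : ∀ U : ∀ s, E s, g U = (1 / 2) * ((∑ s, ‖U s‖ ^ p) ^ (1 / p)) ^ 2) :
    ConvexOn ℝ Set.univ g ∧ Differentiable ℝ g ∧
      ∀ U U' : ∀ s, E s,
        g U' ≤ g U + fderiv ℝ g U (U' - U)
          + ((p - 1) / 2) * ((∑ s, ‖U' s - U s‖ ^ p) ^ (1 / p)) ^ 2 :=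
  smooth_block_potential_general p hp g hg
end

section
/- Let S be a nonempty finite index set, for each s ∈ S let E(s) be a finite-dimensional real inner product space, and let V = ∏_{s∈S} E(s). Let O : V → V satisfy ‖O U − O U'‖_{2,∞} ≤ β · ‖U − U'‖_{2,∞} for all U, U' ∈ V, where β ∈ (0,1). Let ρ : S → [0,1] satisfy ∑_{s∈S} ρ(s) = 1 and ρ_min := min_{s∈S} ρ(s) > 0. Define the averaged asynchronous operator H_ρ : V → V blockwise by (H_ρ U)(s) := (1 − ρ(s)) · U(s) + ρ(s) · (O U)(s). Then for all U, U' ∈ V one has ‖H_ρ(U) − H_ρ(U')‖_{2,∞} ≤ (1 − ρ_min·(1 − β)) · ‖U − U'‖_{2,∞}. -/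
/-- **Contraction of the averaged asynchronous operator.** If `O : V → V` is a
`β`-contraction in the block-supremum norm, `ρ` is a probability vector on `S` with
minimum mass `ρ_min > 0`, and `H_ρ` is defined blockwise by
`(H_ρ U)(s) = (1 − ρ(s)) U(s) + ρ(s) (O U)(s)`, then `H_ρ` is a
`(1 − ρ_min (1 − β))`-contraction in the block-supremum norm. -/
theorem averaged_asynchronous_contraction {S : Type*} [Fintype S] [Nonempty S]
    {E : S → Type*} [∀ s, NormedAddCommGroup (E s)]
    [∀ s, InnerProductSpace ℝ (E s)] [∀ s, FiniteDimensional ℝ (E s)]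
    (O : (∀ s, E s) → ∀ s, E s) (β : ℝ) (hβ : β ∈ Set.Ioo (0 : ℝ) 1)
    (hO : ∀ U U' : ∀ s, E s,
      (Finset.univ.sup' Finset.univ_nonempty fun s => ‖O U s - O U' s‖)
        ≤ β * Finset.univ.sup' Finset.univ_nonempty fun s => ‖U s - U' s‖)
    (ρ : S → ℝ) (hρ0 : ∀ s, 0 ≤ ρ s) (hρ1 : ∀ s, ρ s ≤ 1)
    (hρsum : ∑ s, ρ s = 1)
    (hρmin : 0 < Finset.univ.inf' Finset.univ_nonempty ρ)
    (Hρ : (∀ s, E s) → ∀ s, E s)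
    (hHρ : ∀ (U : ∀ s, E s) (s : S), Hρ U s = (1 - ρ s) • U s + ρ s • O U s) :
    ∀ U U' : ∀ s, E s,
      (Finset.univ.sup' Finset.univ_nonempty fun s => ‖Hρ U s - Hρ U' s‖)
        ≤ (1 - (Finset.univ.inf' Finset.univ_nonempty ρ) * (1 - β)) *
            Finset.univ.sup' Finset.univ_nonempty fun s => ‖U s - U' s‖ := by

  intro U U'
  set M := Finset.univ.sup' Finset.univ_nonempty fun s => ‖U s - U' s‖ with hM
  have hMnn : 0 ≤ M := le_trans (norm_nonneg _) (Finset.le_sup' (fun s => ‖U s - U' s‖) (Finset.mem_univ (Classical.arbitrary S)))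
  set m := Finset.univ.inf' Finset.univ_nonempty ρ with hm
  apply Finset.sup'_le
  intro s _
  have h1 : Hρ U s - Hρ U' s = (1 - ρ s) • (U s - U' s) + ρ s • (O U s - O U' s) := by
    rw [hHρ, hHρ]; module
  have h2 : ‖Hρ U s - Hρ U' s‖ ≤ (1 - ρ s) * ‖U s - U' s‖ + ρ s * ‖O U s - O U' s‖ := by
    rw [h1]
    calc _ ≤ ‖(1 - ρ s) • (U s - U' s)‖ + ‖ρ s • (O U s - O U' s)‖ := norm_add_le _ _
    _ = (1 - ρ s) * ‖U s - U' s‖ + ρ s * ‖O U s - O U' s‖ := by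
        rw [norm_smul, norm_smul, Real.norm_eq_abs, Real.norm_eq_abs,
          abs_of_nonneg (by linarith [hρ1 s]), abs_of_nonneg (hρ0 s)]
  have hUs : ‖U s - U' s‖ ≤ M := Finset.le_sup' (fun s => ‖U s - U' s‖) (Finset.mem_univ s)
  have hOs : ‖O U s - O U' s‖ ≤ β * M := le_trans (Finset.le_sup' (fun s => ‖O U s - O U' s‖) (Finset.mem_univ s)) (hO U U')
  have hms : m ≤ ρ s := Finset.inf'_le _ (Finset.mem_univ s)
  have hβ1 : β < 1 := hβ.2
  have hβ0 : 0 < β := hβ.1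
  calc ‖Hρ U s - Hρ U' s‖ ≤ (1 - ρ s) * M + ρ s * (β * M) := by
        refine h2.trans (add_le_add ?_ ?_)
        · exact mul_le_mul_of_nonneg_left hUs (by linarith [hρ1 s])
        · exact mul_le_mul_of_nonneg_left hOs (hρ0 s)
  _ = (1 - ρ s * (1 - β)) * M := by ring
  _ ≤ (1 - m * (1 - β)) * M := by nlinarith [mul_nonneg (mul_nonneg (sub_nonneg.2 hms) (by linarith : (0:ℝ) ≤ 1 - β)) hMnn]
end

section
/- Let μ and ν be Borel probability measures on ℝ, let r ∈ ℝ and γ > 0, and let f(z) := r + γ z. Then ∫_ℝ (F_{f_#μ}(z) − F_{f_#ν}(z))² dz = γ · ∫_ℝ (F_μ(z) − F_ν(z))² dz, where f_#μ denotes the pushforward of μ under f. In particular, for γ ∈ (0,1) the affine pushforward contracts the Cramér distance by the factor √γ. -/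
open MeasureTheory

/-- **Affine pushforward scaling of the squared Cramér distance.** For Borel
probability measures `μ, ν` on `ℝ`, `r ∈ ℝ`, `γ > 0` and `f(z) = r + γ z`, the
squared Cramér distance of the pushforwards satisfies
`∫ (F_{f_#μ} − F_{f_#ν})² = γ ∫ (F_μ − F_ν)²`; in particular, for `γ ∈ (0,1)` the
affine pushforward contracts the Cramér distance by `√γ`. -/
theorem cramer_pushforward_scaling (μ ν : Measure ℝ)
    [IsProbabilityMeasure μ] [IsProbabilityMeasure ν] (r γ : ℝ) (hγ : 0 < γ) :
    (∫ z : ℝ,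
        ((μ.map (fun x => r + γ * x) (Set.Iic z)).toReal
          - (ν.map (fun x => r + γ * x) (Set.Iic z)).toReal) ^ 2)
      = γ * ∫ z : ℝ, ((μ (Set.Iic z)).toReal - (ν (Set.Iic z)).toReal) ^ 2 := by
  have hf : Measurable (fun x : ℝ => r + γ * x) := by fun_prop
  have hpre : ∀ z : ℝ, (fun x : ℝ => r + γ * x) ⁻¹' Set.Iic z = Set.Iic ((z - r) / γ) := by
    intro z
    ext x
    simp only [Set.mem_preimage, Set.mem_Iic, le_div_iff₀ hγ]
    constructor <;> intro h <;> linarith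
  have hmap : ∀ (κ : Measure ℝ) (z : ℝ),
      κ.map (fun x : ℝ => r + γ * x) (Set.Iic z) = κ (Set.Iic ((z - r) / γ)) := by
    intro κ z
    rw [Measure.map_apply hf measurableSet_Iic, hpre]
  simp_rw [hmap]
  set g : ℝ → ℝ := fun w => ((μ (Set.Iic w)).toReal - (ν (Set.Iic w)).toReal) ^ 2 with hg
  have h1 : (∫ z : ℝ, g ((z - r) / γ)) = ∫ z : ℝ, g (z / γ) :=
    integral_sub_right_eq_self (fun z => g (z / γ)) r
  calc (∫ z : ℝ, g ((z - r) / γ)) = ∫ z : ℝ, g (z / γ) := h1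
    _ = |γ| • ∫ z : ℝ, g z := Measure.integral_comp_div g γ
    _ = γ * ∫ z : ℝ, g z := by rw [abs_of_pos hγ, smul_eq_mul]
end

section
/- Let H ≥ 1 be an integer, S a nonempty finite set, and E a finite-dimensional real inner product space. Let U, U' : {0,1,…,H} × S → E satisfy U(0, x) = U'(0, x) for all x ∈ S, and let T U and T U' be elements of ({1,…,H} × S → E) such that for every h ∈ {1,…,H} and every s ∈ S one has ‖(T U)(h, s) − (T U')(h, s)‖ ≤ max_{x∈S} ‖U(h−1, x) − U'(h−1, x)‖. Then for every λ ∈ (0,1): max_{1≤h≤H, s∈S} λ^h · ‖(T U)(h, s) − (T U')(h, s)‖ ≤ λ · max_{1≤h≤H, s∈S} λ^h · ‖U(h, s) − U'(h, s)‖. -/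
/-- **Fixed-horizon weighted contraction.** If the `h`-th horizon layer of the
output depends nonexpansively (in the statewise supremum) on the `(h−1)`-st horizon
layer of the input, and the inputs agree at horizon `0`, then the update is a
`λ`-contraction in the weighted block-supremum norm
`max_{1≤h≤H, s∈S} λ^h ‖·‖`. -/
theorem fixed_horizon_weighted_contraction {S : Type*} [Fintype S] [Nonempty S]
    {E : Type*} [NormedAddCommGroup E] [InnerProductSpace ℝ E]
    [FiniteDimensional ℝ E]
    (H : ℕ) (hH : 1 ≤ H)
    (U U' : ℕ → S → E) (hU0 : ∀ x : S, U 0 x = U' 0 x)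
    (TU TU' : ℕ → S → E)
    (hT : ∀ h ∈ Finset.Icc 1 H, ∀ s : S,
      ‖TU h s - TU' h s‖
        ≤ Finset.univ.sup' Finset.univ_nonempty fun x => ‖U (h - 1) x - U' (h - 1) x‖)
    (lam : ℝ) (hlam : lam ∈ Set.Ioo (0 : ℝ) 1) :
    ((Finset.Icc 1 H) ×ˢ (Finset.univ : Finset S)).sup'
        (Finset.Nonempty.product (Finset.nonempty_Icc.mpr hH) Finset.univ_nonempty)
        (fun hs => lam ^ hs.1 * ‖TU hs.1 hs.2 - TU' hs.1 hs.2‖)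
      ≤ lam * ((Finset.Icc 1 H) ×ˢ (Finset.univ : Finset S)).sup'
          (Finset.Nonempty.product (Finset.nonempty_Icc.mpr hH) Finset.univ_nonempty)
          (fun hs => lam ^ hs.1 * ‖U hs.1 hs.2 - U' hs.1 hs.2‖) := by
  obtain ⟨hl0, hl1⟩ := hlam
  set ne := Finset.Nonempty.product (Finset.nonempty_Icc.mpr hH)
    (Finset.univ_nonempty (α := S))
  set R := ((Finset.Icc 1 H) ×ˢ (Finset.univ : Finset S)).sup' ne
      (fun hs => lam ^ hs.1 * ‖U hs.1 hs.2 - U' hs.1 hs.2‖) with hR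
  have hRnonneg : 0 ≤ R := by
    obtain ⟨p, hp⟩ := ne
    refine le_trans ?_ (Finset.le_sup' _ hp)
    positivity
  apply Finset.sup'_le
  rintro ⟨h, s⟩ hm
  simp only [Finset.mem_product, Finset.mem_Icc, Finset.mem_univ, and_true] at hm
  obtain ⟨hh1, hhH⟩ := hm
  have hb := hT h (Finset.mem_Icc.mpr ⟨hh1, hhH⟩) s
  obtain ⟨x, _, hx⟩ := Finset.exists_mem_eq_sup' (Finset.univ_nonempty (α := S))
      (fun x => ‖U (h - 1) x - U' (h - 1) x‖)
  rw [hx] at hb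
  rcases eq_or_lt_of_le hh1 with h1 | h2
  · -- h = 1
    have : U (h - 1) x - U' (h - 1) x = 0 := by
      rw [← h1]; simp [hU0 x]
    rw [this, norm_zero] at hb
    have : lam ^ h * ‖TU h s - TU' h s‖ ≤ 0 := by
      have : 0 < lam ^ h := pow_pos hl0 h
      nlinarith [norm_nonneg (TU h s - TU' h s)]
    exact this.trans (by positivity)
  · -- h ≥ 2
    have hmem : (h - 1, x) ∈ (Finset.Icc 1 H) ×ˢ (Finset.univ : Finset S) := by
      simp [Finset.mem_Icc]; omega
    have hle := Finset.le_sup' (f := fun hs : ℕ × S => lam ^ hs.1 * ‖U hs.1 hs.2 - U' hs.1 hs.2‖)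
      hmem
    rw [← hR] at hle
    have hpow : lam ^ h = lam * lam ^ (h - 1) := by
      rw [← pow_succ']; congr 1; omega
    calc lam ^ h * ‖TU h s - TU' h s‖
        ≤ lam ^ h * ‖U (h - 1) x - U' (h - 1) x‖ := by
          have := pow_pos hl0 h
          nlinarith
      _ = lam * (lam ^ (h - 1) * ‖U (h - 1) x - U' (h - 1) x‖) := by rw [hpow]; ring
      _ ≤ lam * R := by nlinarith
end

section
/- Let (Y, d) be a metric space, let T : Y → Y be Lipschitz with constant β ∈ (0,1), and let Π : Y → Y be Lipschitz with constant 1. Suppose η^π ∈ Y satisfies T(η^π) = η^π and η⋆ ∈ Y satisfies Π(T(η⋆)) = η⋆. Let ε := d(Π(η^π), η^π). Then d(η⋆, η^π) ≤ ε / (1 − β). -/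
open Function

/-- **Representation-error bound for the projected fixed point.** If `T` is a
`β`-contraction with fixed point `η^π`, `Π` is nonexpansive, and `η⋆` is the fixed
point of `Π ∘ T`, then `d(η⋆, η^π) ≤ ε/(1 − β)` where `ε := d(Π η^π, η^π)` is the
representation error. -/
theorem projected_fixed_point_representation_error {Y : Type*} [MetricSpace Y]
    (T Proj : Y → Y) (β : ℝ) (hβ : β ∈ Set.Ioo (0 : ℝ) 1)
    (hT : ∀ x y : Y, dist (T x) (T y) ≤ β * dist x y)
    (hProj : ∀ x y : Y, dist (Proj x) (Proj y) ≤ dist x y)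
    (ηπ ηstar : Y) (hηπ : T ηπ = ηπ) (hηstar : Proj (T ηstar) = ηstar) :
    dist ηstar ηπ ≤ dist (Proj ηπ) ηπ / (1 - β) := by
  obtain ⟨hβ0, hβ1⟩ := hβ
  have hT_lip : LipschitzWith β.toNNReal T := .of_dist_le' hT
  have hProj_lip : LipschitzWith 1 Proj := .of_dist_le_mul fun x y ↦ by simpa using hProj x y
  have hcontr : ContractingWith β.toNNReal (Proj ∘ T) :=
    ⟨Real.toNNReal_lt_one.2 hβ1, by simpa using hProj_lip.comp hT_lip⟩
  have hfix : IsFixedPt (Proj ∘ T) ηstar := hηstar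
  -- `ηπ` is an approximate fixed point of `Π ∘ T`, with defect exactly the representation error.
  calc dist ηstar ηπ = dist ηπ ηstar := dist_comm _ _
    _ ≤ dist ηπ ((Proj ∘ T) ηπ) / (1 - β.toNNReal) := hcontr.dist_le_of_fixedPoint ηπ hfix
    _ = dist (Proj ηπ) ηπ / (1 - β) := by
      rw [comp_apply, hηπ, dist_comm, Real.coe_toNNReal _ hβ0.le]
end

section
/- Let (Y, d) be a metric space, let T : Y → Y be Lipschitz with constant β ∈ (0,1), and let Π : Y → Y be Lipschitz with constant 1. Suppose η^π ∈ Y satisfies T(η^π) = η^π and η⋆ ∈ Y satisfies Π(T(η⋆)) = η⋆, and let ε := d(Π(η^π), η^π). Then for every η ∈ Y: d(η, η^π)² ≤ 2·d(η, η⋆)² + 2·(ε/(1 − β))². -/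
/-! `Π ∘ T` is again a `β`-contraction, and it moves `η^π` to `Π η^π`, i.e. by `ε`; the a priori
estimate for contractions then puts its fixed point `η⋆` within `ε / (1 - β)` of `η^π`. The
claim follows from the triangle inequality through `η⋆` and `(a + b)² ≤ 2a² + 2b²`. -/

open NNReal Function

theorem dist_sq_le_two_mul_dist_sq_add {X : Type*} [PseudoMetricSpace X] (x y z : X) :
    dist x z ^ 2 ≤ 2 * dist x y ^ 2 + 2 * dist y z ^ 2 :=
  calc dist x z ^ 2 ≤ (dist x y + dist y z) ^ 2 := by
        gcongr; exact dist_triangle x y z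
    _ ≤ 2 * dist x y ^ 2 + 2 * dist y z ^ 2 := by
        linarith [add_sq_le (a := dist x y) (b := dist y z)]

theorem dist_le_dist_proj_div_of_isFixedPt_comp {Y : Type*} [MetricSpace Y] {T Proj : Y → Y}
    {K : ℝ≥0} (hK : K < 1) (hT : LipschitzWith K T) (hProj : LipschitzWith 1 Proj) {x y : Y}
    (hx : IsFixedPt T x) (hy : IsFixedPt (Proj ∘ T) y) :
    dist x y ≤ dist x (Proj x) / (1 - K) := by
  have hcontr : ContractingWith K (Proj ∘ T) := ⟨hK, by simpa using hProj.comp hT⟩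
  simpa only [comp_apply, hx.eq] using hcontr.dist_le_of_fixedPoint x hy

/-- **Representation-error decomposition.** If `T` is a `β`-contraction with fixed
point `η^π`, `Π` is nonexpansive, `η⋆` is the fixed point of `Π ∘ T`, and
`ε := d(Π η^π, η^π)`, then for every `η`,
`d(η, η^π)² ≤ 2 d(η, η⋆)² + 2 (ε/(1 − β))²`. -/
theorem representation_error_decomposition {Y : Type*} [MetricSpace Y]
    (T Proj : Y → Y) (β : ℝ) (hβ : β ∈ Set.Ioo (0 : ℝ) 1)
    (hT : ∀ x y : Y, dist (T x) (T y) ≤ β * dist x y)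
    (hProj : ∀ x y : Y, dist (Proj x) (Proj y) ≤ dist x y)
    (ηπ ηstar : Y) (hηπ : T ηπ = ηπ) (hηstar : Proj (T ηstar) = ηstar) :
    ∀ η : Y,
      dist η ηπ ^ 2
        ≤ 2 * dist η ηstar ^ 2 + 2 * (dist (Proj ηπ) ηπ / (1 - β)) ^ 2 := by
  intro η
  let K : ℝ≥0 := ⟨β, hβ.1.le⟩
  have hK : K < 1 := hβ.2
  have hTK : LipschitzWith K T := .of_dist_le_mul hT
  have hProj1 : LipschitzWith 1 Proj := .of_dist_le_mul fun x y => by simpa using hProj x y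
  have hstar : dist ηstar ηπ ≤ dist (Proj ηπ) ηπ / (1 - β) := by
    rw [dist_comm, dist_comm (Proj ηπ)]
    exact dist_le_dist_proj_div_of_isFixedPt_comp hK hTK hProj1 hηπ hηstar
  calc dist η ηπ ^ 2 ≤ 2 * dist η ηstar ^ 2 + 2 * dist ηstar ηπ ^ 2 :=
        dist_sq_le_two_mul_dist_sq_add η ηstar ηπ
    _ ≤ 2 * dist η ηstar ^ 2 + 2 * (dist (Proj ηπ) ηπ / (1 - β)) ^ 2 := by
        gcongr
end

section
/- Let λ > 1, let q ≥ max{λ, 1} be a real number, and let m ≥ 0 be an integer. Then ∑_{i=0}^{m−1} (i + q)^{−2} · ∏_{j=i+1}^{m−1} (1 − λ/(j + q)) ≤ (4e/(λ − 1)) · 1/(m + q). -/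
/-!
Writing `S m` for the left-hand side, peeling off the last factor gives the recursion
`S (m + 1) = (1 - λ / (m + q)) * S m + 1 / (m + q) ^ 2`, and `C / (m + q)` is a supersolution of
it as soon as `(λ - 1) * C ≥ 1`. Since `q ≥ λ` keeps the factors nonnegative, induction gives
`S m ≤ C / (m + q)`; the constant `4e / (λ - 1)` is far from optimal.
-/

open Finset

theorem Finset.sum_mul_prod_Ico_succ {R : Type*} [CommSemiring R] (f g : ℕ → R) (n : ℕ) :
    ∑ i ∈ range (n + 1), f i * ∏ j ∈ Ico (i + 1) (n + 1), g j
      = g n * ∑ i ∈ range n, f i * ∏ j ∈ Ico (i + 1) n, g j + f n := by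
  rw [sum_range_succ, Ico_self, prod_empty, mul_one, mul_sum]
  congr 1
  refine sum_congr rfl fun i hi => ?_
  rw [prod_Ico_succ_top (mem_range.mp hi)]
  ring

lemma contraction_step_le {lam C x : ℝ} (hlam : 1 < lam) (hC : 1 ≤ (lam - 1) * C) (hx : 0 < x) :
    (1 - lam / x) * (C / x) + 1 / x ^ 2 ≤ C / (x + 1) := by
  have hC₀ : 0 < C := by nlinarith
  have key : x + 1 ≤ C * ((lam - 1) * x + lam) := by nlinarith
  refine le_of_sub_nonneg ?_
  have hrhs : C / (x + 1) - ((1 - lam / x) * (C / x) + 1 / x ^ 2)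
      = (C * ((lam - 1) * x + lam) - (x + 1)) / (x ^ 2 * (x + 1)) := by
    field_simp
    ring
  rw [hrhs]
  exact div_nonneg (sub_nonneg.mpr key) (by positivity)

lemma sum_inv_sq_mul_prod_le {lam q C : ℝ} (hlam : 1 < lam) (hq : lam ≤ q)
    (hC : 1 ≤ (lam - 1) * C) (m : ℕ) :
    ∑ i ∈ range m, (1 / ((i : ℝ) + q) ^ 2) * ∏ j ∈ Ico (i + 1) m, (1 - lam / ((j : ℝ) + q))
      ≤ C / ((m : ℝ) + q) := by
  induction m with
  | zero =>
    have hC₀ : 0 < C := by nlinarith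
    simp only [range_zero, sum_empty, Nat.cast_zero, zero_add]
    exact div_nonneg hC₀.le (by linarith)
  | succ n ih =>
    have hx : lam ≤ (n : ℝ) + q := by linarith [(n.cast_nonneg : (0 : ℝ) ≤ n)]
    have hfactor : 0 ≤ 1 - lam / ((n : ℝ) + q) := by
      rw [sub_nonneg, div_le_one (by linarith)]
      exact hx
    rw [sum_mul_prod_Ico_succ (fun i => 1 / ((i : ℝ) + q) ^ 2)
      (fun j => 1 - lam / ((j : ℝ) + q)), Nat.cast_succ, add_right_comm]
    calc _ ≤ (1 - lam / ((n : ℝ) + q)) * (C / ((n : ℝ) + q)) + 1 / ((n : ℝ) + q) ^ 2 := by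
          gcongr
      _ ≤ C / ((n : ℝ) + q + 1) := contraction_step_le hlam hC (by linarith)

/-- **Elementary product-sum estimate for linearly-diminishing step sizes.** For
`λ > 1`, `q ≥ max{λ, 1}` and any integer `m ≥ 0`,
`∑_{i=0}^{m−1} (i+q)^{−2} ∏_{j=i+1}^{m−1} (1 − λ/(j+q)) ≤ (4e/(λ−1)) · 1/(m+q)`. -/
theorem product_sum_estimate_linear (lam q : ℝ) (hlam : 1 < lam)
    (hq : max lam 1 ≤ q) (m : ℕ) :
    ∑ i ∈ Finset.range m,
        (1 / ((i : ℝ) + q) ^ 2) * ∏ j ∈ Finset.Ico (i + 1) m, (1 - lam / ((j : ℝ) + q))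
      ≤ (4 * Real.exp 1 / (lam - 1)) * (1 / ((m : ℝ) + q)) := by
  have hC : 1 ≤ (lam - 1) * (4 * Real.exp 1 / (lam - 1)) := by
    rw [mul_div_cancel₀ _ (by linarith)]
    linarith [Real.add_one_le_exp 1]
  rw [← div_eq_mul_one_div]
  exact sum_inv_sq_mul_prod_le hlam ((le_max_left _ _).trans hq) hC m
end
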